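/- (Tensor powers of Boltzmann solutions solve the Boltzmann hierarchy.) Let γ > 0 and let f : [0,T] × ℝ³ × ℝ³ → ℝ be C¹ in (t,x), continuous, with 0 ≤ f(t,x,v) ≤ C e^{−α|v|²} for some C, α > 0, satisfying the Boltzmann equation ∂_t f + v·∇_x f = C(f) pointwise. Then for every k ≥ 1 the functions F_k(t, X_k, V_k) := ∏_{j=1}^k f(t, x_j, v_j) satisfy the k-th Boltzmann hierarchy equation pointwise: ∂_t F_k + Σ_{j=1}^k v_j·∇_{x_j} F_k = γ Σ_{j=1}^k C^{j,k+1}(F_{k+1}), where F_{k+1}(t, X_{k+1}, V_{k+1}) := ∏_{j=1}^{k+1} f(t, x_j, v_j). -/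

import Mathlib

open MeasureTheory Real

noncomputable section

abbrev R3 : Type := EuclideanSpace ℝ (Fin 3)

abbrev S2 : Type := Metric.sphere (0 : R3) 1

/-- Euclidean inner product on ℝ³. -/
noncomputable def dotp (x y : R3) : ℝ := inner ℝ x y

/-- The surface measure on the unit sphere `S² ⊂ ℝ³`. -/
noncomputable def sphMeasure : Measure S2 := (volume : Measure R3).toSphere

/-- Lebesgue measure ⊗ surface measure on `ℝ³ × S²`. -/
noncomputable def prodMeas : Measure (R3 × S2) := (volume : Measure R3).prod sphMeasure

/-- Post-collision velocity `v' = v - ((v - v⋆)·n) n`. -/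
noncomputable def vPost (v w : R3) (n : S2) : R3 := v - dotp (v - w) (n : R3) • (n : R3)

/-- Post-collision velocity `v⋆' = v⋆ + ((v - v⋆)·n) n`. -/
noncomputable def wPost (v w : R3) (n : S2) : R3 := w + dotp (v - w) (n : R3) • (n : R3)

/-- The hard-sphere collision kernel `((v - v⋆)·n)₊`. -/
noncomputable def collKer (v w : R3) (n : S2) : ℝ := max (dotp (v - w) (n : R3)) 0

/-- `T_{j,k+1}[n] V_{k+1}`: replaces `v_j` by `v_j - ((v_{k+1}-v_j)·n) n` and `v_{k+1}` by
`v_{k+1} - ((v_{k+1}-v_j)·n) n` in the `(k+1)`-tuple of velocities `W`. -/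
noncomputable def collUpdate (k : ℕ) (j : Fin k) (n : S2) (W : Fin (k + 1) → R3) :
    Fin (k + 1) → R3 :=
  Function.update
    (Function.update W j.castSucc
      (W j.castSucc - dotp (W (Fin.last k) - W j.castSucc) (n : R3) • (n : R3)))
    (Fin.last k)
    (W (Fin.last k) - dotp (W (Fin.last k) - W j.castSucc) (n : R3) • (n : R3))

/-- The integrand of the Boltzmann-hierarchy collision operator `C^{j,k+1}(F)(X_k, V_k)`;
the integration variable is `p = (v_{k+1}, n) ∈ ℝ³ × S²`. -/
noncomputable def ChierInt (k : ℕ) (j : Fin k)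
    (F : (Fin (k + 1) → R3) → (Fin (k + 1) → R3) → ℝ)
    (X V : Fin k → R3) : R3 × S2 → ℝ :=
  fun p =>
    (F (Fin.snoc X (X j)) (collUpdate k j p.2 (Fin.snoc V p.1))
      - F (Fin.snoc X (X j)) (Fin.snoc V p.1)) * max (dotp (p.1 - V j) ((p.2 : R3))) 0

/-- The Boltzmann-hierarchy collision operator `C^{j,k+1}`. -/
noncomputable def Chier (k : ℕ) (j : Fin k)
    (F : (Fin (k + 1) → R3) → (Fin (k + 1) → R3) → ℝ)
    (X V : Fin k → R3) : ℝ :=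
  ∫ p, ChierInt k j F X V p ∂prodMeas

/-- The integrand of the Boltzmann collision integral `C(g)(v)`. -/
noncomputable def CbInt (g : R3 → ℝ) (v : R3) : R3 × S2 → ℝ :=
  fun p => (g (vPost v p.1 p.2) * g (wPost v p.1 p.2) - g v * g p.1) * collKer v p.1 p.2

/-- The Boltzmann collision integral
`C(g)(v) = γ ∫ (g(v')g(v⋆') - g(v)g(v⋆)) ((v-v⋆)·n)₊ dv⋆ dn`. -/
noncomputable def Cb (γ : ℝ) (g : R3 → ℝ) (v : R3) : ℝ := γ * ∫ p, CbInt g v p ∂prodMeas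

/-! The hierarchy collision term of a tensor power factorises into the spectator factors
`f(t, xᵢ, vᵢ)`, `i ≠ j`, times a one-particle collision integral in `g = f(t, xⱼ, ·)`; by the
Leibniz rule the theorem thus reduces to identifying that integral with `∫ CbInt g v`.
The integrands are not equal: the hierarchy moves both velocities by `-((v⋆ - v)·n) n`.
The gain terms are matched by the reflection `v⋆ ↦ v⋆ - 2((v⋆ - v)·n) n`, which preserves
Lebesgue measure, and the loss terms by the antipodal map `n ↦ -n` of the sphere. Splitting
into gain and loss needs integrability, which follows from the Gaussian bound on `g` and
energy conservation `|v'|² + |v⋆'|² = |v|² + |v⋆|²`. -/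

section GaussianMoment

variable {E : Type*} [NormedAddCommGroup E] [InnerProductSpace ℝ E] [FiniteDimensional ℝ E]
  [MeasurableSpace E] [BorelSpace E] [Nontrivial E] (μ : Measure E) [μ.IsAddHaarMeasure]

theorem integrable_add_norm_mul_exp_neg_mul_sq_norm {α : ℝ} (hα : 0 < α) (a : ℝ) :
    Integrable (fun w : E => (a + ‖w‖) * exp (-α * ‖w‖ ^ 2)) μ := by
  obtain ⟨m, hm⟩ : ∃ m, Module.finrank ℝ E = m + 1 :=
    Nat.exists_eq_add_of_le' Module.finrank_pos
  have h1 := integrableOn_rpow_mul_exp_neg_mul_sq hα (s := m)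
    (neg_one_lt_zero.trans_le m.cast_nonneg)
  have h2 := integrableOn_rpow_mul_exp_neg_mul_sq hα (s := (m + 1 : ℕ))
    (neg_one_lt_zero.trans_le (m + 1).cast_nonneg)
  refine (integrable_fun_norm_addHaar μ (f := fun y => (a + y) * exp (-α * y ^ 2))).2 ?_
  refine IntegrableOn.congr_fun ((h1.const_mul a).add h2) (fun y _ => ?_) measurableSet_Ioi
  simp only [Pi.add_apply, rpow_natCast, smul_eq_mul, hm, Nat.add_sub_cancel]
  ring

end GaussianMoment

namespace MeasureTheory.Measure

variable {E : Type*} [NormedAddCommGroup E] [InnerProductSpace ℝ E] [FiniteDimensional ℝ E]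
  [MeasurableSpace E] [BorelSpace E]

instance toSphere.instIsNegInvariant (μ : Measure E) [μ.IsNegInvariant] :
    μ.toSphere.IsNegInvariant := by
  refine ⟨Measure.ext fun s hs => ?_⟩
  have hneg : Subtype.val '' (-s) = -(Subtype.val '' s : Set E) := by
    rw [← Set.image_neg_eq_neg, ← Set.image_neg_eq_neg, Set.image_image, Set.image_image]
    rfl
  rw [neg_apply, toSphere_apply' _ hs.neg, toSphere_apply' _ hs, hneg, Set.smul_neg,
    measure_neg]

end MeasureTheory.Measure

lemma norm_coe_S2 (n : S2) : ‖(n : R3)‖ = 1 := norm_eq_of_mem_sphere n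

lemma inner_coe_S2_self (n : S2) : inner ℝ (n : R3) (n : R3) = 1 := by
  rw [real_inner_self_eq_norm_sq, norm_coe_S2, one_pow]

lemma reflection_orthogonal_S2_apply (n : S2) (x : R3) :
    (ℝ ∙ (n : R3))ᗮ.reflection x = x - (2 * dotp x n) • (n : R3) := by
  rw [Submodule.reflection_orthogonal_apply, Submodule.reflection_apply,
    Submodule.starProjection_unit_singleton ℝ (norm_coe_S2 n), dotp, real_inner_comm]
  module

instance : IsFiniteMeasure sphMeasure := by unfold sphMeasure; infer_instance

instance : sphMeasure.IsNegInvariant := by unfold sphMeasure; infer_instance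

def velRefl (v : R3) (p : R3 × S2) : R3 × S2 :=
  (p.1 - (2 * dotp (p.1 - v) p.2) • (p.2 : R3), p.2)

lemma velRefl_involutive (v : R3) : Function.Involutive (velRefl v) := by
  rintro ⟨w, n⟩
  simp only [velRefl, dotp, inner_sub_left, real_inner_smul_left, inner_coe_S2_self]
  ext1
  · module
  · rfl

lemma continuous_velRefl (v : R3) : Continuous (velRefl v) := by
  unfold velRefl dotp; fun_prop

lemma measurePreserving_velRefl (v : R3) : MeasurePreserving (velRefl v) prodMeas prodMeas := by
  have hfiber : ∀ n : S2,
      MeasurePreserving (fun w : R3 => w - (2 * dotp (w - v) n) • (n : R3)) := by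
    intro n
    have hformula : (fun w : R3 => w - (2 * dotp (w - v) n) • (n : R3))
        = (· + (2 * dotp v n) • (n : R3)) ∘ (ℝ ∙ (n : R3))ᗮ.reflection := by
      ext1 w
      rw [Function.comp_apply, reflection_orthogonal_S2_apply, dotp, dotp, dotp, inner_sub_left]
      module
    rw [hformula]
    exact (measurePreserving_add_right volume _).comp
      (ℝ ∙ (n : R3))ᗮ.reflection.measurePreserving
  have hskew : MeasurePreserving
      (fun q : S2 × R3 => (q.1, q.2 - (2 * dotp (q.2 - v) q.1) • (q.1 : R3)))
      (sphMeasure.prod volume) (sphMeasure.prod volume) :=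
    (MeasurePreserving.id sphMeasure).skew_product (by unfold dotp; fun_prop)
      (ae_of_all _ fun n => (hfiber n).map_eq)
  exact (Measure.measurePreserving_swap.comp hskew).comp Measure.measurePreserving_swap

lemma measurableEmbedding_velRefl (v : R3) : MeasurableEmbedding (velRefl v) :=
  (MeasurableEquiv.ofInvolutive _ (velRefl_involutive v)
    (continuous_velRefl v).measurable).measurableEmbedding

lemma measurePreserving_neg_snd :
    MeasurePreserving (Prod.map id Neg.neg : R3 × S2 → R3 × S2) prodMeas prodMeas :=
  (MeasurePreserving.id volume).prod (Measure.measurePreserving_neg sphMeasure)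

lemma measurableEmbedding_neg_snd :
    MeasurableEmbedding (Prod.map id Neg.neg : R3 × S2 → R3 × S2) :=
  ((MeasurableEquiv.refl R3).prodCongr (MeasurableEquiv.neg S2)).measurableEmbedding

def CbGain (g : R3 → ℝ) (v : R3) (p : R3 × S2) : ℝ :=
  g (vPost v p.1 p.2) * g (wPost v p.1 p.2) * collKer v p.1 p.2

def CbLoss (g : R3 → ℝ) (v : R3) (p : R3 × S2) : ℝ :=
  g v * g p.1 * collKer v p.1 p.2

lemma cbInt_eq_cbGain_sub_cbLoss (g : R3 → ℝ) (v : R3) :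
    CbInt g v = CbGain g v - CbLoss g v :=
  funext fun _ => sub_mul _ _ _

lemma norm_sq_vPost_add_norm_sq_wPost (v w : R3) (n : S2) :
    ‖vPost v w n‖ ^ 2 + ‖wPost v w n‖ ^ 2 = ‖v‖ ^ 2 + ‖w‖ ^ 2 := by
  simp only [vPost, wPost, dotp, norm_sub_sq_real, norm_add_sq_real, real_inner_smul_right,
    norm_smul, norm_coe_S2, inner_sub_left, Real.norm_eq_abs, mul_one, sq_abs]
  ring

lemma collKer_nonneg (v w : R3) (n : S2) : 0 ≤ collKer v w n := le_max_right _ _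

lemma collKer_le (v w : R3) (n : S2) : collKer v w n ≤ ‖v‖ + ‖w‖ := by
  refine max_le ?_ (by positivity)
  calc dotp (v - w) n ≤ ‖v - w‖ * ‖(n : R3)‖ := real_inner_le_norm _ _
    _ ≤ ‖v‖ + ‖w‖ := by rw [norm_coe_S2, mul_one]; exact norm_sub_le _ _

lemma continuous_collKer (v : R3) : Continuous fun p : R3 × S2 => collKer v p.1 p.2 := by
  unfold collKer dotp; fun_prop

def ChierOneInt (g : R3 → ℝ) (v : R3) (p : R3 × S2) : ℝ :=
  (g (v - dotp (p.1 - v) p.2 • (p.2 : R3)) * g (p.1 - dotp (p.1 - v) p.2 • (p.2 : R3))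
    - g v * g p.1) * max (dotp (p.1 - v) p.2) 0

lemma chierOneInt_eq (g : R3 → ℝ) (v : R3) (p : R3 × S2) :
    ChierOneInt g v p = CbGain g v (velRefl v p) - CbLoss g v (Prod.map id Neg.neg p) := by
  obtain ⟨w, n⟩ := p
  have hdot : dotp (v - (w - (2 * dotp (w - v) n) • (n : R3))) n = dotp (w - v) n := by
    simp only [dotp, inner_sub_left, real_inner_smul_left, inner_coe_S2_self]
    ring
  have hneg : dotp (v - w) (-n : S2) = dotp (w - v) n := by
    rw [dotp, dotp, coe_neg_sphere, inner_neg_right, ← inner_neg_left, neg_sub]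
  simp only [ChierOneInt, CbGain, CbLoss, velRefl, vPost, wPost, collKer, Prod.map, id, hdot,
    hneg]
  rw [show w - (2 * dotp (w - v) n) • (n : R3) + dotp (w - v) n • (n : R3)
      = w - dotp (w - v) n • (n : R3) by module]
  ring

section GaussianBound

variable {g : R3 → ℝ} {C α : ℝ}

lemma abs_mul_le_of_abs_le_gaussian (hg : ∀ x, |g x| ≤ C * exp (-α * ‖x‖ ^ 2)) (x y : R3) :
    |g x * g y| ≤ C ^ 2 * exp (-α * (‖x‖ ^ 2 + ‖y‖ ^ 2)) := by
  calc |g x * g y| = |g x| * |g y| := abs_mul _ _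
    _ ≤ (C * exp (-α * ‖x‖ ^ 2)) * (C * exp (-α * ‖y‖ ^ 2)) :=
      mul_le_mul (hg x) (hg y) (abs_nonneg _) ((abs_nonneg _).trans (hg x))
    _ = C ^ 2 * exp (-α * (‖x‖ ^ 2 + ‖y‖ ^ 2)) := by
      rw [mul_add, exp_add]; ring

lemma integrable_mul_collKer (hg : Measurable g) (hα : 0 < α)
    (hbound : ∀ x, |g x| ≤ C * exp (-α * ‖x‖ ^ 2)) (v : R3) {x y : R3 × S2 → R3}
    (hx : Measurable x) (hy : Measurable y) (hxy : ∀ p, ‖p.1‖ ^ 2 ≤ ‖x p‖ ^ 2 + ‖y p‖ ^ 2) :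
    Integrable (fun p => g (x p) * g (y p) * collKer v p.1 p.2) prodMeas := by
  have hdom : Integrable (fun p : R3 × S2 => C ^ 2 * ((‖v‖ + ‖p.1‖) * exp (-α * ‖p.1‖ ^ 2)))
      prodMeas :=
    (integrable_add_norm_mul_exp_neg_mul_sq_norm volume hα ‖v‖).const_mul _ |>.comp_fst _
  refine hdom.mono' ?_ (ae_of_all _ fun p => ?_)
  · exact (((hg.comp hx).mul (hg.comp hy)).mul
      (continuous_collKer v).measurable).aestronglyMeasurable
  · have hexp : exp (-α * (‖x p‖ ^ 2 + ‖y p‖ ^ 2)) ≤ exp (-α * ‖p.1‖ ^ 2) :=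
      exp_le_exp.2 (mul_le_mul_of_nonpos_left (hxy p) (neg_nonpos.2 hα.le))
    calc ‖g (x p) * g (y p) * collKer v p.1 p.2‖
        = |g (x p) * g (y p)| * collKer v p.1 p.2 := by
          rw [Real.norm_eq_abs, abs_mul, abs_of_nonneg (collKer_nonneg _ _ _)]
      _ ≤ C ^ 2 * exp (-α * ‖p.1‖ ^ 2) * (‖v‖ + ‖p.1‖) :=
          mul_le_mul ((abs_mul_le_of_abs_le_gaussian hbound _ _).trans (by gcongr))
            (collKer_le _ _ _) (collKer_nonneg _ _ _) (by positivity)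
      _ = C ^ 2 * ((‖v‖ + ‖p.1‖) * exp (-α * ‖p.1‖ ^ 2)) := by ring

lemma integrable_cbGain (hg : Measurable g) (hα : 0 < α)
    (hbound : ∀ x, |g x| ≤ C * exp (-α * ‖x‖ ^ 2)) (v : R3) :
    Integrable (CbGain g v) prodMeas :=
  integrable_mul_collKer hg hα hbound v (by unfold vPost dotp; fun_prop)
    (by unfold wPost dotp; fun_prop) fun p => by
      rw [norm_sq_vPost_add_norm_sq_wPost]; exact le_add_of_nonneg_left (sq_nonneg _)

lemma integrable_cbLoss (hg : Measurable g) (hα : 0 < α)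
    (hbound : ∀ x, |g x| ≤ C * exp (-α * ‖x‖ ^ 2)) (v : R3) :
    Integrable (CbLoss g v) prodMeas :=
  integrable_mul_collKer hg hα hbound v measurable_const measurable_fst fun _ =>
    le_add_of_nonneg_left (sq_nonneg _)

theorem integral_chierOneInt_eq_integral_cbInt (hg : Measurable g) (hα : 0 < α)
    (hbound : ∀ x, |g x| ≤ C * exp (-α * ‖x‖ ^ 2)) (v : R3) :
    ∫ p, ChierOneInt g v p ∂prodMeas = ∫ p, CbInt g v p ∂prodMeas := by
  have hrefl := measurePreserving_velRefl v
  have hneg := measurePreserving_neg_snd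
  have hgain := integrable_cbGain hg hα hbound v
  have hloss := integrable_cbLoss hg hα hbound v
  have hgain' : Integrable (fun p => CbGain g v (velRefl v p)) prodMeas :=
    (hrefl.integrable_comp_emb (measurableEmbedding_velRefl v)).2 hgain
  have hloss' : Integrable (fun p => CbLoss g v (Prod.map id Neg.neg p)) prodMeas :=
    (hneg.integrable_comp_emb measurableEmbedding_neg_snd).2 hloss
  calc ∫ p, ChierOneInt g v p ∂prodMeas
      = ∫ p, CbGain g v (velRefl v p) - CbLoss g v (Prod.map id Neg.neg p) ∂prodMeas := by
        simp only [chierOneInt_eq]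
    _ = ∫ p, CbGain g v p ∂prodMeas - ∫ p, CbLoss g v p ∂prodMeas := by
        rw [integral_sub hgain' hloss', hrefl.integral_comp (measurableEmbedding_velRefl v),
          hneg.integral_comp measurableEmbedding_neg_snd]
    _ = ∫ p, CbInt g v p ∂prodMeas := by
        rw [← integral_sub hgain hloss, cbInt_eq_cbGain_sub_cbLoss]; rfl

end GaussianBound

open Finset in
lemma prod_snoc_self (h : R3 → R3 → ℝ) {k : ℕ} (X : Fin k → R3) (j : Fin k)
    (W : Fin (k + 1) → R3) :
    ∏ i, h ((Fin.snoc X (X j) : Fin (k + 1) → R3) i) (W i)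
      = (∏ i ∈ univ.erase j, h (X i) (W i.castSucc))
        * (h (X j) (W j.castSucc) * h (X j) (W (Fin.last k))) := by
  simp only [Fin.prod_univ_castSucc, Fin.snoc_castSucc, Fin.snoc_last,
    ← mul_prod_erase univ (fun i => h (X i) (W i.castSucc)) (mem_univ j)]
  ring

section collUpdate

variable {k : ℕ} (j : Fin k) (n : S2) (V : Fin k → R3) (w : R3)

lemma collUpdate_snoc_last :
    collUpdate k j n (Fin.snoc V w) (Fin.last k) = w - dotp (w - V j) n • (n : R3) := by
  simp [collUpdate]

lemma collUpdate_snoc_castSucc_self :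
    collUpdate k j n (Fin.snoc V w) j.castSucc = V j - dotp (w - V j) n • (n : R3) := by
  simp [collUpdate, (Fin.castSucc_lt_last j).ne]

lemma collUpdate_snoc_castSucc_of_ne {i : Fin k} (hij : i ≠ j) :
    collUpdate k j n (Fin.snoc V w) i.castSucc = V i := by
  simp [collUpdate, (Fin.castSucc_lt_last i).ne, hij]

end collUpdate

open Finset in
lemma chierInt_tensor (h : R3 → R3 → ℝ) {k : ℕ} (j : Fin k) (X V : Fin k → R3)
    (p : R3 × S2) :
    ChierInt k j (fun Y W => ∏ i, h (Y i) (W i)) X V p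
      = (∏ i ∈ univ.erase j, h (X i) (V i)) * ChierOneInt (h (X j)) (V j) p := by
  have hspect : ∏ i ∈ univ.erase j, h (X i) (collUpdate k j p.2 (Fin.snoc V p.1) i.castSucc)
      = ∏ i ∈ univ.erase j, h (X i) (V i) :=
    prod_congr rfl fun i hi => by
      rw [collUpdate_snoc_castSucc_of_ne _ _ _ _ (ne_of_mem_erase hi)]
  simp only [ChierInt, ChierOneInt, prod_snoc_self, hspect, collUpdate_snoc_last,
    collUpdate_snoc_castSucc_self, Fin.snoc_castSucc, Fin.snoc_last]
  ring

open Finset in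
lemma chier_tensor (h : R3 → R3 → ℝ) {k : ℕ} (j : Fin k) (X V : Fin k → R3) :
    Chier k j (fun Y W => ∏ i, h (Y i) (W i)) X V
      = (∏ i ∈ univ.erase j, h (X i) (V i)) * ∫ p, ChierOneInt (h (X j)) (V j) p ∂prodMeas := by
  simp only [Chier, chierInt_tensor, integral_const_mul]

open Finset in
theorem fderiv_prod_apply_coord {𝕜 ι E : Type*} [NontriviallyNormedField 𝕜] [Fintype ι]
    [DecidableEq ι] [NormedAddCommGroup E] [NormedSpace 𝕜 E] (u : ι → 𝕜 × E → 𝕜) (t : 𝕜)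
    (X : ι → E) (hu : ∀ i, DifferentiableAt 𝕜 (u i) (t, X i)) (τ : 𝕜) (Y : ι → E) :
    fderiv 𝕜 (fun p : 𝕜 × (ι → E) => ∏ i, u i (p.1, p.2 i)) (t, X) (τ, Y)
      = ∑ i, (∏ j ∈ univ.erase i, u j (t, X j)) * fderiv 𝕜 (u i) (t, X i) (τ, Y i) := by
  let L : ι → 𝕜 × (ι → E) →L[𝕜] 𝕜 × E := fun i =>
    (ContinuousLinearMap.fst 𝕜 𝕜 (ι → E)).prod
      ((ContinuousLinearMap.proj i).comp (ContinuousLinearMap.snd 𝕜 𝕜 (ι → E)))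
  have hcomp : ∀ i, HasFDerivAt (fun p : 𝕜 × (ι → E) => u i (p.1, p.2 i))
      ((fderiv 𝕜 (u i) (t, X i)).comp (L i)) (t, X) := fun i =>
    (hu i).hasFDerivAt.comp (t, X) (L i).hasFDerivAt
  rw [(HasFDerivAt.finsetProd fun i _ => hcomp i).fderiv]
  simp [L]

theorem tensor_power_solves_boltzmann_hierarchy_general (γ T : ℝ)
    (f : ℝ → R3 → R3 → ℝ)
    (hf_cont : Continuous (fun q : ℝ × R3 × R3 => f q.1 q.2.1 q.2.2))
    (hf_smooth : ∀ v : R3, ContDiff ℝ 1 (fun p : ℝ × R3 => f p.1 p.2 v))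
    (hf_bound : ∃ C α : ℝ, 0 < C ∧ 0 < α ∧ ∀ t ∈ Set.Icc (0 : ℝ) T, ∀ (x v : R3),
      0 ≤ f t x v ∧ f t x v ≤ C * exp (-α * ‖v‖ ^ 2))
    (hf_eq : ∀ t ∈ Set.Icc (0 : ℝ) T, ∀ (x v : R3),
      fderiv ℝ (fun p : ℝ × R3 => f p.1 p.2 v) (t, x) (1, v) = Cb γ (f t x) v) :
    ∀ k : ℕ, 1 ≤ k → ∀ t ∈ Set.Icc (0 : ℝ) T, ∀ X V : Fin k → R3,
      fderiv ℝ (fun p : ℝ × (Fin k → R3) => ∏ j : Fin k, f p.1 (p.2 j) (V j)) (t, X) (1, V)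
        = γ * ∑ j : Fin k,
            Chier k j (fun Y W => ∏ i : Fin (k + 1), f t (Y i) (W i)) X V := by
  obtain ⟨C, α, -, hα, hbound⟩ := hf_bound
  intro k _ t ht X V
  have hmeas : ∀ x, Measurable (f t x) := fun x =>
    (hf_cont.comp (by fun_prop : Continuous fun v : R3 => (t, x, v))).measurable
  have hgauss : ∀ x v, |f t x v| ≤ C * exp (-α * ‖v‖ ^ 2) := fun x v =>
    abs_le.2 ⟨by linarith [(hbound t ht x v).1, (hbound t ht x v).2], (hbound t ht x v).2⟩
  rw [fderiv_prod_apply_coord (fun j q => f q.1 q.2 (V j)) t X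
    (fun j => (hf_smooth (V j)).differentiable one_ne_zero _) 1 V, Finset.mul_sum]
  refine Finset.sum_congr rfl fun j _ => ?_
  rw [hf_eq t ht, Cb, chier_tensor,
    integral_chierOneInt_eq_integral_cbInt (hmeas _) hα (hgauss _)]
  ring

/-- Tensor powers of a solution of the Boltzmann equation solve the Boltzmann hierarchy:
`∂_t F_k + Σ_j v_j·∇_{x_j} F_k = γ Σ_j C^{j,k+1}(F_{k+1})` with `F_k = f^{⊗k}`. -/
theorem tensor_power_solves_boltzmann_hierarchy (γ T : ℝ) (hγ : 0 < γ) (hT : 0 < T)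
    (f : ℝ → R3 → R3 → ℝ)
    (hf_cont : Continuous (fun q : ℝ × R3 × R3 => f q.1 q.2.1 q.2.2))
    (hf_smooth : ∀ v : R3, ContDiff ℝ 1 (fun p : ℝ × R3 => f p.1 p.2 v))
    (hf_bound : ∃ C α : ℝ, 0 < C ∧ 0 < α ∧ ∀ t ∈ Set.Icc (0 : ℝ) T, ∀ (x v : R3),
      0 ≤ f t x v ∧ f t x v ≤ C * exp (-α * ‖v‖ ^ 2))
    (hf_eq : ∀ t ∈ Set.Icc (0 : ℝ) T, ∀ (x v : R3),
      fderiv ℝ (fun p : ℝ × R3 => f p.1 p.2 v) (t, x) (1, v) = Cb γ (f t x) v) :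
    ∀ k : ℕ, 1 ≤ k → ∀ t ∈ Set.Icc (0 : ℝ) T, ∀ X V : Fin k → R3,
      fderiv ℝ (fun p : ℝ × (Fin k → R3) => ∏ j : Fin k, f p.1 (p.2 j) (V j)) (t, X) (1, V)
        = γ * ∑ j : Fin k,
            Chier k j (fun Y W => ∏ i : Fin (k + 1), f t (Y i) (W i)) X V :=
  tensor_power_solves_boltzmann_hierarchy_general γ T f hf_cont hf_smooth hf_bound hf_eq
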